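/- For every s with 0 ≤ s ≤ r-1 and every i with 0 ≤ i ≤ p^n - 1, writing i = Σ_{s=0}^{n-1} i_s p^s in base p, the action of z_{p^s} on x^i is given exactly by z_{p^s}(x^i) = i_s·x^{i - p^s} (where x^{i-p^s} is computed in L, in which x is invertible; in particular z_{p^s}(x^i) = 0 when i_s = 0). -/

import Mathlib

open Polynomial TensorProduct

noncomputable section

/-- The truncated polynomial algebra `K[t]/(t^{p^n})`, underlying the Hopf algebra
`H_{n,r,f}`. -/
abbrev TruncAlg (K : Type) [Field K] (p n : ℕ) : Type :=
  AdjoinRoot (X ^ p ^ n : K[X])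

/-- `t`, the image of `X` in `K[t]/(t^{p^n})`. -/
def tgen (K : Type) [Field K] (p n : ℕ) : TruncAlg K p n :=
  AdjoinRoot.root _

/-- The basis `1, t, t^2, …, t^{p^n-1}` of `K[t]/(t^{p^n})`. -/
def tbasis (K : Type) [Field K] (p n : ℕ) :
    Module.Basis (Fin (p ^ n)) K (TruncAlg K p n) :=
  (AdjoinRoot.powerBasis (f := (X ^ p ^ n : K[X]))
    (pow_ne_zero _ Polynomial.X_ne_zero)).basis.reindex
    (finCongr (by simp))

/-- The dual basis functional `z_j ∈ H = H_{n,r,f}^*`, with `z_j (t^i) = δ_{ij}`;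
junk value `0` out of range. -/
def zdual (K : Type) [Field K] (p n : ℕ) (j : ℕ) :
    Module.Dual K (TruncAlg K p n) :=
  if h : j < p ^ n then (tbasis K p n).coord ⟨j, h⟩ else 0

/-- The coefficient `1/(ℓ!(p-ℓ)!)`, computed in the prime field of `K`. -/
def pfCoeff (K : Type) [Field K] (p ℓ : ℕ) : K :=
  ((ℓ.factorial * (p - ℓ).factorial : ℕ) : K)⁻¹

/-- The element `Δ(t) = t⊗1 + 1⊗t + f Σ_{ℓ=1}^{p-1} (1/(ℓ!(p-ℓ)!)) t^{p^r ℓ} ⊗ t^{p^r (p-ℓ)}`. -/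
def Delta_t (K : Type) [Field K] (p n r : ℕ) (f : K) :
    TruncAlg K p n ⊗[K] TruncAlg K p n :=
  tgen K p n ⊗ₜ 1 + 1 ⊗ₜ tgen K p n +
    f • ∑ ℓ ∈ Finset.Icc 1 (p - 1),
      pfCoeff K p ℓ • ((tgen K p n ^ (p ^ r * ℓ)) ⊗ₜ[K] (tgen K p n ^ (p ^ r * (p - ℓ))))

/-- The comultiplication of `H_{n,r,f}` as a linear map, determined by `Δ(t^i) = Δ(t)^i`
(it is the unique `K`-algebra map with `t ↦ Δ(t)`). -/
def DeltaMap (K : Type) [Field K] (p n r : ℕ) (f : K) :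
    TruncAlg K p n →ₗ[K] TruncAlg K p n ⊗[K] TruncAlg K p n :=
  (tbasis K p n).constr K fun i => (Delta_t K p n r f) ^ (i : ℕ)

/-- Convolution product on `H = (H_{n,r,f})^*`:  `(z * z')(h) = mult ((z ⊗ z')(Δ h))`. -/
def conv (K : Type) [Field K] (p n r : ℕ) (f : K)
    (z z' : Module.Dual K (TruncAlg K p n)) : Module.Dual K (TruncAlg K p n) :=
  (LinearMap.mul' K K) ∘ₗ (TensorProduct.map z z') ∘ₗ DeltaMap K p n r f

/-- Convolution powers; the 0th power is the unit `z_0 = ε` of `H`. -/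
def convPow (K : Type) [Field K] (p n r : ℕ) (f : K)
    (z : Module.Dual K (TruncAlg K p n)) : ℕ → Module.Dual K (TruncAlg K p n)
  | 0 => zdual K p n 0
  | m + 1 => conv K p n r f (convPow K p n r f z m) z

/-- The convolution product `z_1^{j 0} · z_p^{j 1} ⋯ z_{p^{m-1}}^{j (m-1)}` in `H`. -/
def zprod (K : Type) [Field K] (p n r : ℕ) (f : K)
    (j : ℕ → ℕ) : ℕ → Module.Dual K (TruncAlg K p n)
  | 0 => zdual K p n 0
  | m + 1 => conv K p n r f (zprod K p n r f j m)
      (convPow K p n r f (zdual K p n (p ^ m)) (j m))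

/-- The element `α(x) = x⊗1 + 1⊗t + f Σ_{ℓ=1}^{p-1} (1/(ℓ!(p-ℓ)!)) x^{p^r ℓ} ⊗ t^{p^r(p-ℓ)}`
of `L ⊗ H_{n,r,f}`. -/
def alphaEl (K : Type) [Field K] (p n r : ℕ) (f : K)
    (L : Type) [Field L] [Algebra K L] (x : L) : L ⊗[K] TruncAlg K p n :=
  x ⊗ₜ 1 + 1 ⊗ₜ tgen K p n +
    f • ∑ ℓ ∈ Finset.Icc 1 (p - 1),
      pfCoeff K p ℓ • ((x ^ (p ^ r * ℓ)) ⊗ₜ[K] (tgen K p n ^ (p ^ r * (p - ℓ))))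

/-- The coaction `α : L → L ⊗ H_{n,r,f}` as a linear map, determined by `α(x^i) = α(x)^i`
(it is the unique `K`-algebra map with `x ↦ α(x)`). -/
def alphaMap (K : Type) [Field K] (p n r : ℕ) (f : K)
    (L : Type) [Field L] [Algebra K L] (x : L) (bL : Module.Basis (Fin (p ^ n)) K L) :
    L →ₗ[K] L ⊗[K] TruncAlg K p n :=
  bL.constr K fun i => (alphaEl K p n r f L x) ^ (i : ℕ)

/-- The action of `h ∈ H = H_{n,r,f}^*` on `L`:  `h(y) = (mult ∘ (1 ⊗ h))(α(y))`. -/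
def hact (K : Type) [Field K] (p n r : ℕ) (f : K)
    (L : Type) [Field L] [Algebra K L] (x : L) (bL : Module.Basis (Fin (p ^ n)) K L)
    (h : Module.Dual K (TruncAlg K p n)) : L →ₗ[K] L :=
  (TensorProduct.rid K L).toLinearMap ∘ₗ (TensorProduct.map LinearMap.id h) ∘ₗ
    alphaMap K p n r f L x bL

/-- The fractional ideal `𝔓_L^h = {y ∈ L : v_L(y) ≥ h}`. -/
def fracIdeal (L : Type) [Zero L] (vL : L → ℤ) (h : ℤ) : Set L :=
  {y | y ≠ 0 → h ≤ vL y}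

/-- The `s`-th base-`p` digit of a natural number. -/
def digit (p i s : ℕ) : ℕ := i / p ^ s % p

/-- `res(m)`: the least nonnegative residue of `m` modulo `N`. -/
def resZ (N : ℕ) (m : ℤ) : ℤ := m % (N : ℤ)

/-- The `s`-th base-`p` digit of an integer (intended: of a least nonnegative residue). -/
def digitZ (p : ℕ) (m : ℤ) (s : ℕ) : ℤ := m / (p : ℤ) ^ s % (p : ℤ)

/-- The uniformizer `T` of `K = F_q((T))`. -/
def Tvar (F : Type) [Field F] : LaurentSeries F := HahnSeries.single (1 : ℤ) (1 : F)

/-- The scaffold element `λ_j = T^{(j + b·res(aj))/p^n} x^{res(aj)}`. -/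
def lam (F : Type) [Field F] (p n : ℕ) (a b : ℤ)
    (L : Type) [Field L] [Algebra (LaurentSeries F) L] (x : L) (j : ℤ) : L :=
  algebraMap (LaurentSeries F) L
      (Tvar F ^ ((j + b * resZ (p ^ n) (a * j)) / ((p : ℤ) ^ n))) *
    x ^ (resZ (p ^ n) (a * j)).toNat

/-!
Modulo the ideal generated by `1 ⊗ t^{p^r}`, the coaction sends `x` to `x ⊗ 1 + 1 ⊗ t`, and
`z_{p^s}` kills that ideal because `p^s < p^r`. Hence `z_{p^s}(x^i)` is the coefficient of
`t^{p^s}` in `(x ⊗ 1 + 1 ⊗ t)^i`, namely `C(i, p^s) x^{i - p^s}`, and by Lucas's theorem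
`C(i, p^s) ≡ i_s (mod p)`.
-/

theorem choose_pow_modEq_digit (p : ℕ) [Fact p.Prime] (i s : ℕ) :
    i.choose (p ^ s) ≡ digit p i s [MOD p] := by
  induction s generalizing i with
  | zero => simpa [digit] using (Nat.mod_modEq i p).symm
  | succ s ih =>
    have hp : 0 < p := (Fact.out : p.Prime).pos
    have lucas := Choose.choose_modEq_choose_mod_mul_choose_div_nat (n := i) (k := p ^ (s + 1))
      (p := p)
    rw [Nat.pow_mod, Nat.mod_self, zero_pow (Nat.succ_ne_zero s), Nat.zero_mod,
      Nat.choose_zero_right, one_mul, pow_succ, Nat.mul_div_cancel _ hp] at lucas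
    refine lucas.trans ((ih (i / p)).trans ?_)
    rw [digit, digit, Nat.div_div_eq_div_mul, ← pow_succ']

theorem digit_eq_zero_of_lt {p i s : ℕ} (h : i < p ^ s) : digit p i s = 0 := by
  rw [digit, Nat.div_eq_of_lt h, Nat.zero_mod]

section TruncAlg

variable {K : Type} [Field K] {p n : ℕ}

theorem tgen_pow_self : tgen K p n ^ p ^ n = 0 := by
  rw [tgen, ← AdjoinRoot.mk_X, ← map_pow, AdjoinRoot.mk_self]

theorem tbasis_apply {m : ℕ} (hm : m < p ^ n) : tbasis K p n ⟨m, hm⟩ = tgen K p n ^ m := by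
  rw [tbasis, Module.Basis.reindex_apply, PowerBasis.basis_eq_pow]
  rfl

theorem zdual_tgen_pow {j : ℕ} (hj : j < p ^ n) (m : ℕ) :
    zdual K p n j (tgen K p n ^ m) = if m = j then 1 else 0 := by
  rw [zdual, dif_pos hj]
  by_cases hm : m < p ^ n
  · rw [← tbasis_apply hm, Module.Basis.coord_apply, Module.Basis.repr_self,
      Finsupp.single_apply]
    simp [Fin.ext_iff, eq_comm]
  · obtain ⟨k, rfl⟩ := Nat.exists_eq_add_of_le (Nat.le_of_not_lt hm)
    rw [pow_add, tgen_pow_self, zero_mul, map_zero, if_neg (by omega)]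

theorem zdual_mul_tgen_pow_of_lt {j e : ℕ} (hje : j < e) (hj : j < p ^ n)
    (a : TruncAlg K p n) : zdual K p n j (a * tgen K p n ^ e) = 0 := by
  have hzero : zdual K p n j ∘ₗ LinearMap.mulRight K (tgen K p n ^ e) = 0 := by
    refine (tbasis K p n).ext fun ⟨m, hm⟩ => ?_
    rw [LinearMap.comp_apply, LinearMap.mulRight_apply, tbasis_apply, ← pow_add,
      zdual_tgen_pow hj, if_neg (by omega), LinearMap.zero_apply]
  exact LinearMap.congr_fun hzero a

variable {L : Type} [CommRing L] [Algebra K L]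

theorem rid_map_zdual_mul_tmul_tgen_pow_of_lt {j e : ℕ} (hje : j < e) (hj : j < p ^ n)
    (u : L ⊗[K] TruncAlg K p n) :
    TensorProduct.rid K L (TensorProduct.map LinearMap.id (zdual K p n j)
      (u * (1 : L) ⊗ₜ[K] (tgen K p n ^ e))) = 0 := by
  induction u using TensorProduct.induction_on with
  | zero => simp
  | tmul y a =>
    rw [Algebra.TensorProduct.tmul_mul_tmul, TensorProduct.map_tmul,
      zdual_mul_tgen_pow_of_lt hje hj, TensorProduct.tmul_zero, map_zero]
  | add u v hu hv => rw [add_mul, map_add, map_add, hu, hv, add_zero]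

theorem rid_map_zdual_add_pow {j : ℕ} (hj : j < p ^ n) (x : L) (i : ℕ) :
    TensorProduct.rid K L (TensorProduct.map LinearMap.id (zdual K p n j)
      ((x ⊗ₜ[K] 1 + 1 ⊗ₜ[K] tgen K p n) ^ i)) = (i.choose j : K) • x ^ (i - j) := by
  have hterm : ∀ m, TensorProduct.rid K L (TensorProduct.map LinearMap.id (zdual K p n j)
      ((1 ⊗ₜ[K] tgen K p n) ^ m * (x ⊗ₜ[K] 1) ^ (i - m) * (i.choose m : L ⊗[K] TruncAlg K p n)))
      = if m = j then (i.choose m : K) • x ^ (i - m) else 0 := by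
    intro m
    rw [Algebra.TensorProduct.tmul_pow, Algebra.TensorProduct.tmul_pow,
      Algebra.TensorProduct.tmul_mul_tmul, one_pow, one_pow, one_mul, mul_one, mul_comm,
      ← map_natCast (algebraMap K _), Algebra.algebraMap_eq_smul_one, smul_mul_assoc, one_mul,
      map_smul, map_smul, TensorProduct.map_tmul, LinearMap.id_apply, zdual_tgen_pow hj,
      TensorProduct.rid_tmul]
    split_ifs <;> simp
  rw [add_comm, add_pow, map_sum, map_sum, Finset.sum_congr rfl fun m _ => hterm m,
    Finset.sum_ite_eq']
  split_ifs with hji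
  · rfl
  · rw [Nat.choose_eq_zero_of_lt (by simpa [Nat.lt_succ_iff] using hji), Nat.cast_zero,
      zero_smul]

end TruncAlg

section Coaction

variable {K : Type} [Field K] {p n r : ℕ} {f : K} {L : Type} [Field L] [Algebra K L] {x : L}

theorem tmul_tgen_pow_dvd_alphaEl_sub :
    (1 : L) ⊗ₜ[K] (tgen K p n ^ p ^ r) ∣ alphaEl K p n r f L x - (x ⊗ₜ 1 + 1 ⊗ₜ tgen K p n) := by
  rw [alphaEl, add_sub_cancel_left, Algebra.smul_def]
  refine Dvd.dvd.mul_left (Finset.dvd_sum fun ℓ hℓ => ?_) _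
  have hℓp : ℓ < p := by rw [Finset.mem_Icc] at hℓ; omega
  rw [Algebra.smul_def]
  refine Dvd.dvd.mul_left ⟨(x ^ (p ^ r * ℓ)) ⊗ₜ (tgen K p n ^ (p ^ r * (p - ℓ) - p ^ r)), ?_⟩ _
  have : p ^ r ≤ p ^ r * (p - ℓ) := Nat.le_mul_of_pos_right _ (by omega)
  rw [Algebra.TensorProduct.tmul_mul_tmul, one_mul, ← pow_add, Nat.add_sub_cancel' this]

theorem rid_map_zdual_alphaEl_pow {j : ℕ} (hjr : j < p ^ r) (hjn : j < p ^ n) (i : ℕ) :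
    TensorProduct.rid K L (TensorProduct.map LinearMap.id (zdual K p n j)
      (alphaEl K p n r f L x ^ i)) = (i.choose j : K) • x ^ (i - j) := by
  obtain ⟨w, hw⟩ := (tmul_tgen_pow_dvd_alphaEl_sub (f := f) (x := x)).trans
    (sub_dvd_pow_sub_pow _ _ i)
  rw [sub_eq_iff_eq_add', mul_comm] at hw
  rw [hw, map_add, map_add, rid_map_zdual_add_pow hjn,
    rid_map_zdual_mul_tmul_tgen_pow_of_lt hjr hjn, add_zero]

theorem hact_apply_pow {bL : Module.Basis (Fin (p ^ n)) K L}
    (hbL : ∀ i : Fin (p ^ n), bL i = x ^ (i : ℕ)) {i : ℕ} (hi : i < p ^ n)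
    (h : Module.Dual K (TruncAlg K p n)) :
    hact K p n r f L x bL h (x ^ i) =
      TensorProduct.rid K L (TensorProduct.map LinearMap.id h (alphaEl K p n r f L x ^ i)) := by
  rw [hact, ← hbL ⟨i, hi⟩, LinearMap.comp_apply, LinearMap.comp_apply, alphaMap,
    Module.Basis.constr_basis]
  rfl

end Coaction

theorem zdual_act_on_xpow_low_general
    (p : ℕ) [Fact p.Prime] (F : Type) [Field F] [CharP F p]
    (n r : ℕ) (hrn : r < n)
    (f : LaurentSeries F)
    (L : Type) [Field L] [Algebra (LaurentSeries F) L]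
    (x : L)
    (bL : Module.Basis (Fin (p ^ n)) (LaurentSeries F) L)
    (hbL : ∀ i : Fin (p ^ n), bL i = x ^ (i : ℕ)) :
    ∀ s : ℕ, s < r → ∀ i : ℕ, i ≤ p ^ n - 1 →
      hact (LaurentSeries F) p n r f L x bL (zdual (LaurentSeries F) p n (p ^ s)) (x ^ i)
        = (digit p i s : LaurentSeries F) • (x ^ ((i : ℤ) - (p : ℤ) ^ s)) := by
  intro s hs i hi
  have : CharP (LaurentSeries F) p :=
    charP_of_injective_algebraMap (algebraMap F (LaurentSeries F)).injective p
  have hp : 1 < p := (Fact.out : p.Prime).one_lt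
  have hsr : p ^ s < p ^ r := Nat.pow_lt_pow_right hp hs
  have hsn : p ^ s < p ^ n := hsr.trans (Nat.pow_lt_pow_right hp hrn)
  rw [hact_apply_pow hbL (by omega), rid_map_zdual_alphaEl_pow hsr hsn,
    (CharP.natCast_eq_natCast' _ p (choose_pow_modEq_digit p i s))]
  rcases le_or_gt (p ^ s) i with hle | hlt
  · rw [← Nat.cast_pow, ← Nat.cast_sub hle, zpow_natCast]
  · rw [digit_eq_zero_of_lt hlt, Nat.cast_zero, zero_smul, zero_smul]

/-- For `0 ≤ s ≤ r-1` and `0 ≤ i ≤ p^n-1`, writing `i_s` for the `s`-th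
base-`p` digit of `i`, the action of `z_{p^s}` on `x^i` is `z_{p^s}(x^i) = i_s·x^{i-p^s}`. -/
theorem zdual_act_on_xpow_low
    (p : ℕ) [Fact p.Prime] (F : Type) [Field F] [Fintype F] [CharP F p]
    (n r : ℕ) (hr : 0 < r) (hrn : r < n) (hn2r : n ≤ 2 * r)
    (f : LaurentSeries F) (hf : f ≠ 0)
    (L : Type) [Field L] [Algebra (LaurentSeries F) L]
    (β : LaurentSeries F) (b : ℤ) (hb : 0 < b) (hpb : ¬ (p : ℤ) ∣ b)
    (hβ : β ≠ 0) (hordβ : β.order = -b)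
    (x : L) (hx : x ^ p ^ n = algebraMap (LaurentSeries F) L β)
    (bL : Module.Basis (Fin (p ^ n)) (LaurentSeries F) L)
    (hbL : ∀ i : Fin (p ^ n), bL i = x ^ (i : ℕ))
    (vL : L → ℤ)
    (hvmul : ∀ y z : L, y ≠ 0 → z ≠ 0 → vL (y * z) = vL y + vL z)
    (hvadd : ∀ y z : L, y ≠ 0 → z ≠ 0 → y + z ≠ 0 → min (vL y) (vL z) ≤ vL (y + z))
    (hvK : ∀ c : LaurentSeries F, c ≠ 0 →
      vL (algebraMap (LaurentSeries F) L c) = (p : ℤ) ^ n * c.order) :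
    ∀ s : ℕ, s < r → ∀ i : ℕ, i ≤ p ^ n - 1 →
      hact (LaurentSeries F) p n r f L x bL (zdual (LaurentSeries F) p n (p ^ s)) (x ^ i)
        = (digit p i s : LaurentSeries F) • (x ^ ((i : ℤ) - (p : ℤ) ^ s)) :=
  zdual_act_on_xpow_low_general p F n r hrn f L x bL hbL
end
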